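/- Proposition 4.2 (second order, full sandwich): for every u ∈ L¹(Ω), a² · ( min(λ₀,λ₁) / max(λ₀,λ₁) ) · TGV²_λ(u) ≤ DTGV²_λ(u) ≤ TGV²_λ(u). -/

import Mathlib

open MeasureTheory Filter
open scoped ENNReal Topology Pointwise

noncomputable section

abbrev E2 := EuclideanSpace ℝ (Fin 2)

/-- Build a vector of `ℝ²` from its coordinates. -/
def vec2 (x y : ℝ) : E2 := (WithLp.equiv 2 (Fin 2 → ℝ)).symm ![x, y]

/-- The elliptical set `E^{a,θ}`. -/
def Ellip (a θ : ℝ) : Set E2 :=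
  {x : E2 | (x 0 * Real.cos θ + x 1 * Real.sin θ) ^ 2 +
      ((-(x 0) * Real.sin θ + x 1 * Real.cos θ) / a) ^ 2 ≤ 1}

/-- Partial derivative in the `i`-th coordinate direction. -/
def pd (i : Fin 2) (f : E2 → ℝ) (x : E2) : ℝ :=
  fderiv ℝ f x (EuclideanSpace.single i 1)

/-- Divergence of a vector field on `ℝ²`. -/
def divVec (v : E2 → E2) (x : E2) : ℝ :=
  pd 0 (fun y => v y 0) x + pd 1 (fun y => v y 1) x

/-- `C¹` vector fields compactly supported in `Ω`. -/
def Cc1 (Ω : Set E2) (v : E2 → E2) : Prop :=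
  ContDiff ℝ 1 v ∧ HasCompactSupport v ∧ tsupport v ⊆ Ω

/-- The directional total variation `DTV^{a,θ}`. -/
def DTV (Ω : Set E2) (a θ : ℝ) (u : E2 → ℝ) : ℝ≥0∞ :=
  ⨆ v ∈ {v : E2 → E2 | Cc1 Ω v ∧ ∀ x ∈ Ω, v x ∈ Ellip a θ},
    ENNReal.ofReal (∫ x in Ω, u x * divVec v x)

/-- The total variation. -/
def TV (Ω : Set E2) (u : E2 → ℝ) : ℝ≥0∞ :=
  ⨆ v ∈ {v : E2 → E2 | Cc1 Ω v ∧ ∀ x ∈ Ω, ‖v x‖ ≤ 1},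
    ENNReal.ofReal (∫ x in Ω, u x * divVec v x)

abbrev Mat2 := Matrix (Fin 2) (Fin 2) ℝ

/-- The rotation matrix `R_θ`. -/
def Rmat (θ : ℝ) : Mat2 := !![Real.cos θ, -Real.sin θ; Real.sin θ, Real.cos θ]

/-- The matrix `Λ_a = diag(1,a)`. -/
def Lmat (a : ℝ) : Mat2 := !![1, 0; 0, a]

/-- Symmetric `2×2` matrices whose rows and columns lie in `S ⊆ ℝ²`. -/
def rowcol (S : Set E2) : Set Mat2 :=
  {V : Mat2 | V.IsSymm ∧ (∀ i : Fin 2, vec2 (V i 0) (V i 1) ∈ S) ∧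
    ∀ j : Fin 2, vec2 (V 0 j) (V 1 j) ∈ S}

/-- `E^{a,θ}_{2×2}`. -/
def EllipM (a θ : ℝ) : Set Mat2 := rowcol (Ellip a θ)

/-- `B_{2×2}`. -/
def BallM : Set Mat2 := rowcol (Metric.closedBall 0 1)

/-- Divergence of a (symmetric) matrix field. -/
def divMat (W : E2 → Mat2) (x : E2) : E2 :=
  vec2 (pd 0 (fun y => W y 0 0) x + pd 1 (fun y => W y 0 1) x)
    (pd 0 (fun y => W y 1 0) x + pd 1 (fun y => W y 1 1) x)

/-- Second-order divergence of a matrix field. -/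
def div2Mat (W : E2 → Mat2) (x : E2) : ℝ :=
  pd 0 (pd 0 (fun y => W y 0 0)) x + pd 1 (pd 1 (fun y => W y 1 1)) x +
    2 * pd 0 (pd 1 (fun y => W y 0 1)) x

/-- `C²` symmetric-matrix fields compactly supported in `Ω`. -/
def Cc2Sym (Ω : Set E2) (W : E2 → Mat2) : Prop :=
  (∀ i j : Fin 2, ContDiff ℝ 2 (fun x => W x i j)) ∧ HasCompactSupport W ∧
    tsupport W ⊆ Ω ∧ ∀ x, (W x).IsSymm

/-- The second-order directional total generalized variation `DTGV²_λ`. -/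
def DTGV2 (Ω : Set E2) (a θ l0 l1 : ℝ) (u : E2 → ℝ) : ℝ≥0∞ :=
  ⨆ W ∈ {W : E2 → Mat2 | Cc2Sym Ω W ∧ (∀ x ∈ Ω, W x ∈ l0 • EllipM a θ) ∧
      ∀ x ∈ Ω, divMat W x ∈ l1 • Ellip a θ},
    ENNReal.ofReal (∫ x in Ω, u x * div2Mat W x)

/-- The second-order total generalized variation `TGV²_λ`. -/
def TGV2 (Ω : Set E2) (l0 l1 : ℝ) (u : E2 → ℝ) : ℝ≥0∞ :=
  ⨆ W ∈ {W : E2 → Mat2 | Cc2Sym Ω W ∧ (∀ x ∈ Ω, W x ∈ l0 • BallM) ∧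
      ∀ x ∈ Ω, divMat W x ∈ Metric.closedBall 0 l1},
    ENNReal.ofReal (∫ x in Ω, u x * div2Mat W x)

/-! ### Auxiliary lemmas -/

lemma my_vec2_zero (x y : ℝ) : vec2 x y 0 = x := by simp [vec2]

lemma my_vec2_one (x y : ℝ) : vec2 x y 1 = y := by simp [vec2]

lemma my_smul_vec2 (c x y : ℝ) : c • vec2 x y = vec2 (c*x) (c*y) := by
  ext i; fin_cases i <;> simp [vec2]

lemma my_normsq (v : E2) : ‖v‖^2 = v 0 ^ 2 + v 1 ^ 2 := by
  rw [EuclideanSpace.norm_eq, Real.sq_sqrt (by positivity)]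
  simp [Fin.sum_univ_two, sq_abs]

lemma my_ellip_arith {a : ℝ} (θ : ℝ) (ha : 0 < a) (ha1 : a ≤ 1) {p q : ℝ}
    (hn : p^2 + q^2 ≤ a^2) :
    (p * Real.cos θ + q * Real.sin θ)^2 + ((-p * Real.sin θ + q * Real.cos θ)/a)^2 ≤ 1 := by
  have hcs := Real.cos_sq_add_sin_sq θ
  set P := p * Real.cos θ + q * Real.sin θ with hP
  set Q := -p * Real.sin θ + q * Real.cos θ with hQ
  have hPQ : P^2 + Q^2 = p^2 + q^2 := by rw [hP, hQ]; nlinarith [hcs]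
  rw [div_pow]
  have ha2 : (0:ℝ) < a^2 := by positivity
  have haa : a^2 ≤ 1 := by nlinarith
  have h2 : Q^2 / a^2 * a^2 = Q^2 := div_mul_cancel₀ _ (by positivity)
  have key : (P^2 + Q^2/a^2) * a^2 ≤ 1 * a^2 := by
    rw [add_mul, h2, one_mul]
    nlinarith [mul_nonneg (sq_nonneg P) (by linarith : (0:ℝ) ≤ 1 - a^2)]
  exact le_of_mul_le_mul_right key ha2

lemma my_ellip_arith' {a : ℝ} (θ : ℝ) (ha : 0 < a) (ha1 : a ≤ 1) {p q : ℝ}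
    (h : (p * Real.cos θ + q * Real.sin θ)^2 + ((-p * Real.sin θ + q * Real.cos θ)/a)^2 ≤ 1) :
    p^2 + q^2 ≤ 1 := by
  have hcs := Real.cos_sq_add_sin_sq θ
  set P := p * Real.cos θ + q * Real.sin θ with hP
  set Q := -p * Real.sin θ + q * Real.cos θ with hQ
  have hPQ : P^2 + Q^2 = p^2 + q^2 := by rw [hP, hQ]; nlinarith [hcs]
  rw [div_pow] at h
  have haa : a^2 ≤ 1 := by nlinarith
  have h2 : Q^2 / a^2 * a^2 = Q^2 := div_mul_cancel₀ _ (by positivity)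
  have hr : 0 ≤ Q^2/a^2 := by positivity
  have hq : Q^2 ≤ Q^2/a^2 := by nlinarith
  clear_value P Q
  linarith

lemma my_mem_ellip_of_norm_le {a θ : ℝ} (ha : 0 < a) (ha1 : a ≤ 1) {v : E2}
    (h : ‖v‖ ≤ a) : v ∈ Ellip a θ := by
  have hn : v 0 ^ 2 + v 1 ^ 2 ≤ a ^ 2 := by
    rw [← my_normsq]; exact pow_le_pow_left₀ (norm_nonneg v) h 2
  have := my_ellip_arith θ ha ha1 hn
  simpa [Ellip] using this

lemma my_norm_le_of_mem_ellip {a θ : ℝ} (ha : 0 < a) (ha1 : a ≤ 1) {v : E2}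
    (h : v ∈ Ellip a θ) : ‖v‖ ≤ 1 := by
  have h' : (v 0 * Real.cos θ + v 1 * Real.sin θ)^2 +
      ((-(v 0) * Real.sin θ + v 1 * Real.cos θ)/a)^2 ≤ 1 := h
  have hn : v 0 ^ 2 + v 1 ^ 2 ≤ 1 := my_ellip_arith' θ ha ha1 h'
  nlinarith [my_normsq v, norm_nonneg v]

lemma my_ellipM_subset_ballM {a θ : ℝ} (ha : 0 < a) (ha1 : a ≤ 1) :
    EllipM a θ ⊆ BallM := by
  rintro V ⟨hs, hr, hc⟩
  exact ⟨hs,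
    fun i => mem_closedBall_zero_iff.2 (my_norm_le_of_mem_ellip ha ha1 (hr i)),
    fun j => mem_closedBall_zero_iff.2 (my_norm_le_of_mem_ellip ha ha1 (hc j))⟩

lemma my_smul_mem_ellipM {a θ : ℝ} (ha : 0 < a) (ha1 : a ≤ 1) {N : Mat2}
    (hN : N ∈ BallM) : a • N ∈ EllipM a θ := by
  obtain ⟨hs, hr, hc⟩ := hN
  refine ⟨?_, fun i => ?_, fun j => ?_⟩
  · unfold Matrix.IsSymm at hs ⊢; rw [Matrix.transpose_smul, hs]
  · have : vec2 ((a • N) i 0) ((a • N) i 1) = a • vec2 (N i 0) (N i 1) := by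
      rw [my_smul_vec2]; simp [Matrix.smul_apply]
    rw [this]
    refine my_mem_ellip_of_norm_le ha ha1 ?_
    rw [norm_smul, Real.norm_eq_abs, abs_of_pos ha]
    calc a * ‖vec2 (N i 0) (N i 1)‖ ≤ a * 1 :=
          mul_le_mul_of_nonneg_left (mem_closedBall_zero_iff.1 (hr i)) ha.le
      _ = a := mul_one a
  · have : vec2 ((a • N) 0 j) ((a • N) 1 j) = a • vec2 (N 0 j) (N 1 j) := by
      rw [my_smul_vec2]; simp [Matrix.smul_apply]
    rw [this]
    refine my_mem_ellip_of_norm_le ha ha1 ?_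
    rw [norm_smul, Real.norm_eq_abs, abs_of_pos ha]
    calc a * ‖vec2 (N 0 j) (N 1 j)‖ ≤ a * 1 :=
          mul_le_mul_of_nonneg_left (mem_closedBall_zero_iff.1 (hc j)) ha.le
      _ = a := mul_one a

lemma my_pd_const_mul (c : ℝ) {f : E2 → ℝ} (hf : Differentiable ℝ f) (i : Fin 2) :
    pd i (fun y => c * f y) = fun x => c * pd i f x := by
  funext x; unfold pd; rw [fderiv_const_mul (hf x)]; simp

lemma my_diff_pd {f : E2 → ℝ} (hf : ContDiff ℝ 2 f) (i : Fin 2) :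
    Differentiable ℝ (pd i f) := by
  unfold pd
  exact ((hf.fderiv_right (m := 1) (by norm_num)).clm_apply contDiff_const).differentiable one_ne_zero

lemma my_pd_pd_const_mul (c : ℝ) {f : E2 → ℝ} (hf : ContDiff ℝ 2 f) (i j : Fin 2)
    (x : E2) : pd i (pd j (fun y => c * f y)) x = c * pd i (pd j f) x := by
  rw [my_pd_const_mul c (hf.differentiable (by norm_num)) j,
      my_pd_const_mul c (my_diff_pd hf j) i]

/-- the sandwich `a²·(min λ₀ λ₁ / max λ₀ λ₁)·TGV²_λ(u) ≤ DTGV²_λ(u) ≤ TGV²_λ(u)`. -/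
theorem dtgv2_tgv2_sandwich (Ω : Set E2) (hΩo : IsOpen Ω) (hΩb : Bornology.IsBounded Ω)
    (a θ l0 l1 : ℝ) (ha : 0 < a) (ha1 : a ≤ 1) (hl0 : 0 < l0) (hl1 : 0 < l1)
    (u : E2 → ℝ) (hu : IntegrableOn u Ω) :
    ENNReal.ofReal (a ^ 2 * (min l0 l1 / max l0 l1)) * TGV2 Ω l0 l1 u ≤
        DTGV2 Ω a θ l0 l1 u ∧
      DTGV2 Ω a θ l0 l1 u ≤ TGV2 Ω l0 l1 u := by
  constructor
  · -- lower bound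
    have hmain : ENNReal.ofReal a * TGV2 Ω l0 l1 u ≤ DTGV2 Ω a θ l0 l1 u := by
      rw [TGV2, ENNReal.mul_iSup]
      refine iSup_le fun W => ?_
      rw [ENNReal.mul_iSup]
      refine iSup_le fun hW => ?_
      obtain ⟨⟨hC, hK, hsupp, hsym⟩, hM, hD⟩ := hW
      set W' : E2 → Mat2 := fun x => a • W x with hW'
      have hcomp : ∀ i j : Fin 2, (fun x => W' x i j) = fun x => a * W x i j := by
        intro i j; funext x; simp [hW', Matrix.smul_apply]
      have hC' : ∀ i j : Fin 2, ContDiff ℝ 2 fun x => W' x i j := by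
        intro i j; rw [hcomp]; exact contDiff_const.mul (hC i j)
      have hdiv2 : ∀ x, div2Mat W' x = a * div2Mat W x := by
        intro x
        unfold div2Mat
        rw [hcomp 0 0, hcomp 1 1, hcomp 0 1,
            my_pd_pd_const_mul a (hC 0 0) 0 0 x, my_pd_pd_const_mul a (hC 1 1) 1 1 x,
            my_pd_pd_const_mul a (hC 0 1) 0 1 x]
        ring
      have hdivM : ∀ x, divMat W' x = a • divMat W x := by
        intro x
        unfold divMat
        rw [hcomp 0 0, hcomp 0 1, hcomp 1 0, hcomp 1 1,
            my_pd_const_mul a ((hC 0 0).differentiable (by norm_num)) 0,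
            my_pd_const_mul a ((hC 0 1).differentiable (by norm_num)) 1,
            my_pd_const_mul a ((hC 1 0).differentiable (by norm_num)) 0,
            my_pd_const_mul a ((hC 1 1).differentiable (by norm_num)) 1,
            my_smul_vec2]
        congr 1 <;> ring
      have hmem : W' ∈ {W : E2 → Mat2 | Cc2Sym Ω W ∧
          (∀ x ∈ Ω, W x ∈ l0 • EllipM a θ) ∧ ∀ x ∈ Ω, divMat W x ∈ l1 • Ellip a θ} := by
        refine ⟨⟨hC', ?_, ?_, ?_⟩, ?_, ?_⟩
        · refine hK.mono fun x hx => ?_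
          simp only [Function.mem_support, ne_eq] at hx ⊢
          intro h0; exact hx (by rw [hW']; simp only; rw [h0, smul_zero])
        · refine (closure_mono ?_).trans hsupp
          intro x hx
          simp only [Function.mem_support, ne_eq] at hx ⊢
          intro h0; exact hx (by rw [hW']; simp only; rw [h0, smul_zero])
        · intro x
          have := hsym x
          unfold Matrix.IsSymm at this ⊢
          show Matrix.transpose (a • W x) = a • W x
          rw [Matrix.transpose_smul, this]
        · intro x hx
          obtain ⟨N, hN, hNe⟩ := hM x hx
          have hNe' : l0 • N = W x := hNe
          refine Set.mem_smul_set.2 ⟨a • N, my_smul_mem_ellipM ha ha1 hN, ?_⟩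
          show l0 • a • N = a • W x
          rw [smul_comm, hNe']
        · intro x hx
          rw [hdivM x]
          have hnorm : ‖divMat W x‖ ≤ l1 := mem_closedBall_zero_iff.1 (hD x hx)
          refine Set.mem_smul_set.2 ⟨(a/l1) • divMat W x, ?_, ?_⟩
          · refine my_mem_ellip_of_norm_le ha ha1 ?_
            rw [norm_smul, Real.norm_eq_abs, abs_of_pos (by positivity)]
            calc a / l1 * ‖divMat W x‖ ≤ a / l1 * l1 :=
                  mul_le_mul_of_nonneg_left hnorm (by positivity)
              _ = a := div_mul_cancel₀ a hl1.ne'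
          · rw [smul_smul, mul_div_cancel₀ a hl1.ne']
      have hval : ENNReal.ofReal a * ENNReal.ofReal (∫ x in Ω, u x * div2Mat W x)
          = ENNReal.ofReal (∫ x in Ω, u x * div2Mat W' x) := by
        rw [← ENNReal.ofReal_mul ha.le]
        congr 1
        have : (fun x => u x * div2Mat W' x) = fun x => a * (u x * div2Mat W x) := by
          funext x; rw [hdiv2 x]; ring
        rw [this, integral_const_mul]
      rw [hval, DTGV2]
      exact le_biSup (fun V : E2 → Mat2 => ENNReal.ofReal (∫ x in Ω, u x * div2Mat V x)) hmem
    refine le_trans (mul_le_mul_left (ENNReal.ofReal_le_ofReal ?_) _) hmain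
    have h1 : min l0 l1 / max l0 l1 ≤ 1 :=
      (div_le_one (lt_of_lt_of_le hl0 (le_max_left _ _))).2 min_le_max
    have h2 : a ^ 2 * (min l0 l1 / max l0 l1) ≤ a ^ 2 * 1 :=
      mul_le_mul_of_nonneg_left h1 (by positivity)
    nlinarith
  · -- upper bound
    refine biSup_mono ?_
    rintro W ⟨hC, hM, hD⟩
    refine ⟨hC, fun x hx => ?_, fun x hx => ?_⟩
    · exact Set.smul_set_mono (my_ellipM_subset_ballM ha ha1) (hM x hx)
    · obtain ⟨w, hw, hwe⟩ := Set.mem_smul_set.1 (hD x hx)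
      rw [← hwe]
      refine mem_closedBall_zero_iff.2 ?_
      rw [norm_smul, Real.norm_eq_abs, abs_of_pos hl1]
      calc l1 * ‖w‖ ≤ l1 * 1 :=
            mul_le_mul_of_nonneg_left (my_norm_le_of_mem_ellip ha ha1 hw) hl1.le
        _ = l1 := mul_one l1
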